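/- Assume X ≠ 0 and the equation A = X Z has at least one solution Z (i.e., A lies in the column space of X). Then Z* = X† A is the unique minimizer of the nuclear norm ‖Z‖_* over all Z satisfying A = X Z. -/

import Mathlib

/-
For feasible `Z`, the matrix `P X` is the orthogonal projection onto the row space of `X`
and `P A = (P X) Z`, so `Zᵀ Z = (P A)ᵀ (P A) + Wᵀ W` with `W = Z - P A`. The nuclear norm is
`tr √(Zᵀ Z)`, and the square root is operator monotone: if `R ⪰ 0` and `S² ⪯ R²` then `S ⪯ R`.
Hence for `D ⪰ 0`, `D ≠ 0`, the matrix `√(C + D) - √C` is positive semidefinite and nonzero,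
so it has positive trace, and `tr √(C + D) > tr √C`.
-/

open Matrix

/-- The nuclear norm of a real matrix: the sum of its singular values,
i.e. the sum of the square roots of the eigenvalues of `Aᵀ * A`. -/
noncomputable def nuclearNorm {m n : Type*} [Fintype m] [Fintype n] [DecidableEq n]
    (A : Matrix m n ℝ) : ℝ :=
  ∑ i, Real.sqrt ((show (Aᵀ * A).IsHermitian by
    rw [IsHermitian, conjTranspose_eq_transpose_of_trivial, transpose_mul, transpose_transpose]).eigenvalues i)

/-- `P` is the Moore–Penrose pseudo-inverse of `X`. -/
def IsMoorePenroseInv {m n : Type*} [Fintype m] [Fintype n]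
    (X : Matrix m n ℝ) (P : Matrix n m ℝ) : Prop :=
  X * P * X = X ∧ P * X * P = P ∧ (X * P)ᵀ = X * P ∧ (P * X)ᵀ = P * X

/-- `(U, σ, V)` is a skinny SVD of `X`: `U` and `V` have orthonormal columns,
`σ` lists the (positive) nonzero singular values, `X = U * diagonal σ * Vᵀ`,
and the number of columns of `U` and `V` is `rank X`. -/
def IsSkinnySVD {m n r : ℕ} (X : Matrix (Fin m) (Fin n) ℝ)
    (U : Matrix (Fin m) (Fin r) ℝ) (σ : Fin r → ℝ) (V : Matrix (Fin n) (Fin r) ℝ) : Prop :=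
  Uᵀ * U = 1 ∧ Vᵀ * V = 1 ∧ (∀ i, 0 < σ i) ∧
    X = U * Matrix.diagonal σ * Vᵀ ∧ r = X.rank

open scoped MatrixOrder ComplexOrder

section
variable {k 𝕜 : Type*} [Fintype k] [DecidableEq k] [RCLike 𝕜]

theorem Matrix.IsHermitian.trace_cfc {A : Matrix k k 𝕜} (hA : A.IsHermitian) (f : ℝ → ℝ) :
    (cfc f A).trace = ∑ i, (f (hA.eigenvalues i) : 𝕜) := by
  rw [hA.cfc_eq, IsHermitian.cfc, Unitary.conjStarAlgAut_apply, trace_mul_cycle,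
    Unitary.coe_star_mul_self, one_mul, trace_diagonal]
  rfl

theorem Matrix.PosSemidef.sub_of_mul_self_sub_mul_self {R S : Matrix k k 𝕜} (hR : R.PosSemidef)
    (hS : S.IsHermitian) (h : (R * R - S * S).PosSemidef) : (R - S).PosSemidef := by
  set M := R - S with hM_def
  have hM : M.IsHermitian := hR.1.sub hS
  rw [hM.posSemidef_iff_eigenvalues_nonneg]
  intro j
  rw [Pi.zero_apply]
  by_contra! hμ
  set μ := hM.eigenvalues j
  set v := (hM.eigenvectorBasis j).ofLp
  have hv : M *ᵥ v = (μ : 𝕜) • v := by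
    rw [hM.mulVec_eigenvectorBasis j, RCLike.real_smul_eq_coe_smul (K := 𝕜)]
  have hvM : star v ᵥ* M = (μ : 𝕜) • star v := by
    rw [← star_star (star v ᵥ* M), star_vecMul, star_star, hM.eq, hv, star_smul, RCLike.star_def,
      RCLike.conj_ofReal]
  have hv1 : star v ⬝ᵥ v = 1 := by
    rw [dotProduct_comm, ← EuclideanSpace.inner_eq_star_dotProduct,
      inner_self_eq_norm_sq_to_K, (hM.eigenvectorBasis).orthonormal.1 j]
    simp
  -- with `S = R - M` and `M v = μ v`, the quadratic form of `R² - S² = RM + MR - M²` at `v`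
  -- is `2μ ⟪v, R v⟫ - μ²`, which is negative when `μ < 0`
  have hRS : R * R - S * S = R * M + M * R - M * M := by
    rw [hM_def]; noncomm_ring
  have key : star v ⬝ᵥ (R * R - S * S) *ᵥ v
      = ((2 * μ : ℝ) : 𝕜) * (star v ⬝ᵥ R *ᵥ v) - ((μ ^ 2 : ℝ) : 𝕜) := by
    simp only [hRS, sub_mulVec, add_mulVec, ← mulVec_mulVec, hv, mulVec_smul, dotProduct_sub,
      dotProduct_add, dotProduct_mulVec (star v) M, hvM, dotProduct_smul, smul_dotProduct,
      smul_eq_mul, hv1]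
    push_cast
    ring
  have hquad := (RCLike.nonneg_iff.mp (h.dotProduct_mulVec_nonneg v)).1
  rw [key, map_sub, RCLike.re_ofReal_mul, RCLike.ofReal_re] at hquad
  nlinarith [(RCLike.nonneg_iff.mp (hR.dotProduct_mulVec_nonneg v)).1]

theorem Matrix.PosSemidef.trace_sqrt_lt_trace_sqrt_add {C D : Matrix k k 𝕜} (hC : C.PosSemidef)
    (hD : D.PosSemidef) (hD0 : D ≠ 0) : (CFC.sqrt C).trace < (CFC.sqrt (C + D)).trace := by
  set S := CFC.sqrt C
  set R := CFC.sqrt (C + D)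
  have hS : S * S = C := CFC.sqrt_mul_sqrt_self C hC.nonneg
  have hR : R * R = C + D := CFC.sqrt_mul_sqrt_self _ (hC.add hD).nonneg
  have hRS : (R - S).PosSemidef :=
    (CFC.sqrt_nonneg _).posSemidef.sub_of_mul_self_sub_mul_self
      (CFC.sqrt_nonneg C).posSemidef.isHermitian (by rwa [hR, hS, add_sub_cancel_left])
  have hne : R - S ≠ 0 := by
    rw [sub_ne_zero]
    contrapose! hD0
    rw [← add_sub_cancel_left C D, ← hR, hD0, hS, sub_self]
  rw [← sub_pos, ← trace_sub]
  exact lt_of_le_of_ne hRS.trace_nonneg (Ne.symm (mt hRS.trace_eq_zero_iff.mp hne))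

end

section
variable {m k p R : Type*} [Fintype m] [Fintype k]

theorem Matrix.posSemidef_transpose_mul_self [CommRing R] [PartialOrder R] [StarRing R]
    [StarOrderedRing R] [TrivialStar R] (M : Matrix m k R) : (Mᵀ * M).PosSemidef := by
  simpa using posSemidef_conjTranspose_mul_self M

theorem Matrix.transpose_mul_self_eq_add_of_isIdempotentElem [CommRing R] {Q : Matrix k k R}
    (hQ : Qᵀ = Q) (hQQ : IsIdempotentElem Q) (Z : Matrix k p R) :
    Zᵀ * Z = (Q * Z)ᵀ * (Q * Z) + (Z - Q * Z)ᵀ * (Z - Q * Z) := by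
  have hQZ : (Q * Z)ᵀ * Z = Zᵀ * (Q * Z) := by
    rw [transpose_mul, hQ, Matrix.mul_assoc]
  have hQZQZ : (Q * Z)ᵀ * (Q * Z) = Zᵀ * (Q * Z) := by
    rw [transpose_mul, hQ, Matrix.mul_assoc, ← Matrix.mul_assoc Q Q, hQQ.eq]
  rw [transpose_sub, Matrix.sub_mul, Matrix.mul_sub, Matrix.mul_sub, hQZ, hQZQZ]
  abel

end

theorem nuclearNorm_eq_trace_sqrt {m k : Type*} [Fintype m] [Fintype k] [DecidableEq k]
    (M : Matrix m k ℝ) : nuclearNorm M = (CFC.sqrt (Mᵀ * M)).trace := by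
  rw [CFC.sqrt_eq_real_sqrt _ (posSemidef_transpose_mul_self M).nonneg, cfcₙ_eq_cfc,
    (posSemidef_transpose_mul_self M).1.trace_cfc]
  rfl

theorem stmt7_general {m n : ℕ} (X A : Matrix (Fin m) (Fin n) ℝ)
    (P : Matrix (Fin n) (Fin m) ℝ) (hP : IsMoorePenroseInv X P)
    (hfeas : ∃ Z : Matrix (Fin n) (Fin n) ℝ, A = X * Z) :
    A = X * (P * A) ∧
    ∀ Z : Matrix (Fin n) (Fin n) ℝ, A = X * Z → Z ≠ P * A →
      nuclearNorm (P * A) < nuclearNorm Z := by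
  obtain ⟨hXPX, hPXP, -, hPX⟩ := hP
  refine ⟨?_, fun Z hZ hne => ?_⟩
  · obtain ⟨Z₀, rfl⟩ := hfeas
    rw [← Matrix.mul_assoc, ← Matrix.mul_assoc, hXPX]
  have hproj : IsIdempotentElem (P * X) := by
    rw [IsIdempotentElem, ← Matrix.mul_assoc, hPXP]
  have hPA : P * A = P * X * Z := by rw [hZ, Matrix.mul_assoc]
  have hW : (Z - P * A)ᵀ * (Z - P * A) ≠ 0 := by
    rwa [Ne, ← conjTranspose_eq_transpose_of_trivial, conjTranspose_mul_self_eq_zero, sub_eq_zero]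
  rw [nuclearNorm_eq_trace_sqrt, nuclearNorm_eq_trace_sqrt,
    transpose_mul_self_eq_add_of_isIdempotentElem hPX hproj Z, ← hPA]
  exact (posSemidef_transpose_mul_self _).trace_sqrt_lt_trace_sqrt_add
    (posSemidef_transpose_mul_self _) hW

/-- If `A = X Z` is feasible, then `Z* = X† A` is the unique minimizer of the
nuclear norm over all feasible `Z`. -/
theorem stmt7 {m n : ℕ} (X A : Matrix (Fin m) (Fin n) ℝ) (hX : X ≠ 0)
    (P : Matrix (Fin n) (Fin m) ℝ) (hP : IsMoorePenroseInv X P)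
    (hfeas : ∃ Z : Matrix (Fin n) (Fin n) ℝ, A = X * Z) :
    A = X * (P * A) ∧
    ∀ Z : Matrix (Fin n) (Fin n) ℝ, A = X * Z → Z ≠ P * A →
      nuclearNorm (P * A) < nuclearNorm Z :=
  stmt7_general X A P hP hfeas
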